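/- Let T > 0, u > 0, s > 0, f_c > 0, ε > 0, g > 0, N₀ > 0, B > 0, q_r, q_s ≥ 0, q_c > 0, r_max ≥ 1, and suppose ď(r) = T/u − r·V(r) > 0 for all r ∈ [1, r_max], where V(r) = 1/s + (e^{ε r²} − e^{ε})/f_c. Define Q(r) = q_r + q_s + q_c(e^{ε r²} − e^{ε}) and ž(r) = r·Q′(r) + Q(r) − f′(1/(ď(r)·r))/(g·r²) − (G(1/(ď(r)·r))/g)·(V(r) + r·V′(r)). Then ž is strictly increasing on [1, r_max]. (Lemma 7: monotonicity of the stationarity function for the optimal lossy compression ratio, where r = √Ř is the square root of the lossy compression ratio and u is the fixed data utility.) -/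

import Mathlib

/-- f(x) = N₀ (2^{x/B} − 1). -/
noncomputable def fTx (N₀ B x : ℝ) : ℝ := N₀ * ((2 : ℝ) ^ (x / B) - 1)

/-- f′(x) = (N₀ ln 2 / B)·2^{x/B}. -/
noncomputable def fTx' (N₀ B x : ℝ) : ℝ := N₀ * Real.log 2 / B * (2 : ℝ) ^ (x / B)

/-- G(x) = f(x) − x f′(x). -/
noncomputable def GG (N₀ B x : ℝ) : ℝ := fTx N₀ B x - x * fTx' N₀ B x

/-- Q(r) = q_r + q_s + q_c·(e^{εr²} − e^{ε}), the per-bit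
sensing-compression-reward energy at square-root compression ratio r. -/
noncomputable def Qlossy (qr qs qc ε r : ℝ) : ℝ :=
  qr + qs + qc * (Real.exp (ε * r ^ 2) - Real.exp ε)

/-- V(r) = 1/s + (e^{εr²} − e^{ε})/f_c, the per-bit sensing-plus-compression
time at square-root compression ratio r. -/
noncomputable def Vlossy (s fc ε r : ℝ) : ℝ :=
  1 / s + (Real.exp (ε * r ^ 2) - Real.exp ε) / fc

/-- ď(r) = T/u − r·V(r), the transmission duration per utility bit when the
time constraint of problem P5 is tight. -/
noncomputable def dLossy (T u s fc ε r : ℝ) : ℝ := T / u - r * Vlossy s fc ε r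

/-- ž(r) = r Q′(r) + Q(r) − f′(1/(ď(r)r))/(g r²) − (G(1/(ď(r)r))/g)·(V(r) + r V′(r)),
the stationarity function for the optimal lossy compression ratio. -/
noncomputable def zLossy (T u s fc ε g N₀ B qr qs qc r : ℝ) : ℝ :=
  r * deriv (Qlossy qr qs qc ε) r + Qlossy qr qs qc ε r
    - fTx' N₀ B (1 / (dLossy T u s fc ε r * r)) / (g * r ^ 2)
    - GG N₀ B (1 / (dLossy T u s fc ε r * r)) / g
        * (Vlossy s fc ε r + r * deriv (Vlossy s fc ε) r)

/-!
Write y = 1/(ď r). Since ∂/∂ď [ď f(1/(ď r))] = G(y) and ď′ = −(V + rV′), the function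
ž = (rQ)′ + (G(y) ď′ − f′(y)/r²)/g is the derivative of the total energy r ↦ r Q + ď f(y)/g.
Differentiating once more, g ž′ − g (rQ)″ is f″(y) (ď′ r + ď)²/(ď³ r⁴) + G(y) ď″ + 2 f′(y)/r³.
Here (rQ)″ = q_c e^{εr²}(6εr + 4ε²r³) > 0, f″ and f′ are positive, ď″ = −(rV)″ < 0, and
G(y) < 0 because f is strictly convex with f(0) = 0.
-/

open Real

section Channel

variable (N₀ B : ℝ)

theorem hasDerivAt_fTx (x : ℝ) : HasDerivAt (fTx N₀ B) (fTx' N₀ B x) x :=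
  ((((hasDerivAt_id' x).div_const B).const_rpow two_pos).sub_const 1 |>.const_mul N₀).congr_deriv
    (by rw [fTx']; ring)

theorem hasDerivAt_fTx' (x : ℝ) :
    HasDerivAt (fTx' N₀ B) (log 2 / B * fTx' N₀ B x) x :=
  (((hasDerivAt_id' x).div_const B).const_rpow two_pos |>.const_mul (N₀ * log 2 / B)).congr_deriv
    (by rw [fTx']; ring)

theorem hasDerivAt_GG (x : ℝ) :
    HasDerivAt (GG N₀ B) (-(x * (log 2 / B * fTx' N₀ B x))) x :=
  ((hasDerivAt_fTx N₀ B x).sub ((hasDerivAt_id' x).fun_mul (hasDerivAt_fTx' N₀ B x))).congr_deriv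
    (by ring)

variable {N₀ B}

theorem fTx'_pos (hN₀ : 0 < N₀) (hB : 0 < B) (x : ℝ) : 0 < fTx' N₀ B x := by
  have := log_pos one_lt_two
  unfold fTx'; positivity

theorem GG_neg (hN₀ : 0 < N₀) (hB : 0 < B) {x : ℝ} (hx : 0 < x) : GG N₀ B x < 0 := by
  set t := log 2 * (x / B)
  have ht : 0 < t := mul_pos (log_pos one_lt_two) (div_pos hx hB)
  have hpow : (2 : ℝ) ^ (x / B) = exp t := by rw [rpow_def_of_pos two_pos]
  have key : (1 - t) * exp t < 1 := by
    calc (1 - t) * exp t < exp (-t) * exp t :=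
          mul_lt_mul_of_pos_right (one_sub_lt_exp_neg ht.ne') (exp_pos t)
      _ = 1 := by rw [← exp_add, neg_add_cancel, exp_zero]
  have hGG : GG N₀ B x = N₀ * ((1 - t) * exp t - 1) := by
    simp only [GG, fTx, fTx', hpow, t]; ring
  rw [hGG]
  exact mul_neg_of_pos_of_neg hN₀ (by linarith)

end Channel

noncomputable def transmissionSlope (N₀ B : ℝ) (d d' : ℝ → ℝ) (x : ℝ) : ℝ :=
  GG N₀ B (1 / (d x * x)) * d' x - fTx' N₀ B (1 / (d x * x)) / x ^ 2

section Transmission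

variable {N₀ B : ℝ}

theorem hasDerivAt_transmissionSlope {d d' : ℝ → ℝ} {d'' r : ℝ} (hd : HasDerivAt d (d' r) r)
    (hd' : HasDerivAt d' d'' r) (hr : r ≠ 0) (hdr : d r ≠ 0) :
    HasDerivAt (transmissionSlope N₀ B d d')
      (log 2 / B * fTx' N₀ B (1 / (d r * r)) * (d' r * r + d r) ^ 2 / (d r ^ 3 * r ^ 4)
        + GG N₀ B (1 / (d r * r)) * d'' + 2 * fTx' N₀ B (1 / (d r * r)) / r ^ 3) r := by
  have hy : HasDerivAt (fun x => 1 / (d x * x)) (-(d' r * r + d r) / (d r * r) ^ 2) r :=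
    ((hasDerivAt_const r 1).fun_div (hd.fun_mul (hasDerivAt_id' r))
      (mul_ne_zero hdr hr)).congr_deriv (by ring)
  have hG := ((hasDerivAt_GG N₀ B _).comp r hy).fun_mul hd'
  have hf' :=
    ((hasDerivAt_fTx' N₀ B _).comp r hy).fun_div (hasDerivAt_pow 2 r) (pow_ne_zero 2 hr)
  refine (hG.sub hf').congr_deriv ?_
  simp only [Function.comp_def]
  field_simp
  ring

theorem transmissionSlope_deriv_pos (hN₀ : 0 < N₀) (hB : 0 < B) {d d₁ d₂ r : ℝ} (hr : 0 < r)
    (hd : 0 < d) (hd₂ : d₂ ≤ 0) :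
    0 < log 2 / B * fTx' N₀ B (1 / (d * r)) * (d₁ * r + d) ^ 2 / (d ^ 3 * r ^ 4)
      + GG N₀ B (1 / (d * r)) * d₂ + 2 * fTx' N₀ B (1 / (d * r)) / r ^ 3 := by
  have hf' := fTx'_pos hN₀ hB (1 / (d * r))
  have hG := GG_neg hN₀ hB (x := 1 / (d * r)) (by positivity)
  have := log_pos one_lt_two
  have h1 : 0 ≤ log 2 / B * fTx' N₀ B (1 / (d * r)) * (d₁ * r + d) ^ 2 / (d ^ 3 * r ^ 4) := by
    positivity
  have h2 : 0 ≤ GG N₀ B (1 / (d * r)) * d₂ := mul_nonneg_of_nonpos_of_nonpos hG.le hd₂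
  have h3 : 0 < 2 * fTx' N₀ B (1 / (d * r)) / r ^ 3 := by positivity
  linarith

end Transmission

theorem hasDerivAt_affine_exp_sq (α β ε x : ℝ) :
    HasDerivAt (fun y => α + β * exp (ε * y ^ 2)) (β * (2 * ε * x * exp (ε * x ^ 2))) x :=
  (((hasDerivAt_pow 2 x).const_mul ε).exp.const_mul β |>.const_add α).congr_deriv (by ring)

theorem hasDerivAt_mul_deriv_add_affine_exp_sq (α β ε r : ℝ) :
    HasDerivAt
      (fun x => x * deriv (fun y => α + β * exp (ε * y ^ 2)) x + (α + β * exp (ε * x ^ 2)))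
      (β * exp (ε * r ^ 2) * (6 * ε * r + 4 * ε ^ 2 * r ^ 3)) r := by
  have hderiv : deriv (fun y => α + β * exp (ε * y ^ 2)) =
      fun x => β * (2 * ε * x * exp (ε * x ^ 2)) :=
    funext fun x => (hasDerivAt_affine_exp_sq α β ε x).deriv
  rw [hderiv]
  have hE := ((hasDerivAt_pow 2 r).const_mul ε).exp
  have hQ' := (((hasDerivAt_id' r).const_mul (2 * ε)).fun_mul hE).const_mul β
  exact (((hasDerivAt_id' r).fun_mul hQ').add (hasDerivAt_affine_exp_sq α β ε r)).congr_deriv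
    (by ring)

theorem Qlossy_eq_const_add_mul_exp (qr qs qc ε : ℝ) :
    Qlossy qr qs qc ε = fun r => (qr + qs - qc * exp ε) + qc * exp (ε * r ^ 2) := by
  funext r; rw [Qlossy]; ring

theorem Vlossy_eq_const_add_mul_exp (s fc ε : ℝ) :
    Vlossy s fc ε = fun r => (1 / s - exp ε / fc) + fc⁻¹ * exp (ε * r ^ 2) := by
  funext r; rw [Vlossy]; ring

theorem hasDerivAt_dLossy (T u s fc ε r : ℝ) :
    HasDerivAt (dLossy T u s fc ε)
      (-(r * deriv (Vlossy s fc ε) r + Vlossy s fc ε r)) r := by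
  have hV : HasDerivAt (Vlossy s fc ε) (deriv (Vlossy s fc ε) r) r := by
    rw [Vlossy_eq_const_add_mul_exp]
    exact (hasDerivAt_affine_exp_sq _ _ ε r).differentiableAt.hasDerivAt
  exact (((hasDerivAt_id' r).fun_mul hV).const_sub (T / u)).congr_deriv (by ring)

theorem zLossy_eq_add_transmissionSlope (T u s fc ε g N₀ B qr qs qc : ℝ) :
    zLossy T u s fc ε g N₀ B qr qs qc = fun r =>
      (r * deriv (Qlossy qr qs qc ε) r + Qlossy qr qs qc ε r)
        + transmissionSlope N₀ B (dLossy T u s fc ε)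
            (fun x => -(x * deriv (Vlossy s fc ε) x + Vlossy s fc ε x)) r / g := by
  funext r; rw [zLossy, transmissionSlope]; ring

theorem exists_hasDerivAt_zLossy_pos {T u s fc ε g N₀ B qr qs qc r : ℝ} (hfc : 0 < fc)
    (hε : 0 < ε) (hg : 0 < g) (hN₀ : 0 < N₀) (hB : 0 < B) (hqc : 0 < qc) (hr : 0 < r)
    (hdr : 0 < dLossy T u s fc ε r) :
    ∃ z', HasDerivAt (zLossy T u s fc ε g N₀ B qr qs qc) z' r ∧ 0 < z' := by
  have hQ : HasDerivAt (fun x => x * deriv (Qlossy qr qs qc ε) x + Qlossy qr qs qc ε x)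
      (qc * exp (ε * r ^ 2) * (6 * ε * r + 4 * ε ^ 2 * r ^ 3)) r := by
    rw [Qlossy_eq_const_add_mul_exp]; exact hasDerivAt_mul_deriv_add_affine_exp_sq _ _ ε r
  have hV : HasDerivAt (fun x => -(x * deriv (Vlossy s fc ε) x + Vlossy s fc ε x))
      (-(fc⁻¹ * exp (ε * r ^ 2) * (6 * ε * r + 4 * ε ^ 2 * r ^ 3))) r := by
    rw [Vlossy_eq_const_add_mul_exp]; exact (hasDerivAt_mul_deriv_add_affine_exp_sq _ _ ε r).neg
  have hK := hasDerivAt_transmissionSlope (N₀ := N₀) (B := B) (hasDerivAt_dLossy T u s fc ε r) hV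
    hr.ne' hdr.ne'
  rw [zLossy_eq_add_transmissionSlope]
  refine ⟨_, hQ.add (hK.div_const g), add_pos (by positivity) (div_pos ?_ hg)⟩
  exact transmissionSlope_deriv_pos hN₀ hB hr hdr (neg_nonpos.2 (by positivity))

theorem z_lossy_strictly_increasing_general
    (T u s fc ε g N₀ B qr qs qc rmax : ℝ)
    (hfc : 0 < fc) (hε : 0 < ε)
    (hg : 0 < g) (hN₀ : 0 < N₀) (hB : 0 < B)
    (hqc : 0 < qc)
    (hd : ∀ r ∈ Set.Icc (1 : ℝ) rmax, 0 < dLossy T u s fc ε r) :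
    StrictMonoOn (zLossy T u s fc ε g N₀ B qr qs qc) (Set.Icc 1 rmax) := by
  have hz : ∀ r ∈ Set.Icc (1 : ℝ) rmax,
      ∃ z', HasDerivAt (zLossy T u s fc ε g N₀ B qr qs qc) z' r ∧ 0 < z' := fun r hr =>
    exists_hasDerivAt_zLossy_pos hfc hε hg hN₀ hB hqc (by linarith [hr.1]) (hd r hr)
  refine strictMonoOn_of_deriv_pos (convex_Icc 1 rmax) (fun r hr => ?_) (fun r hr => ?_)
  · obtain ⟨z', hz', -⟩ := hz r hr
    exact hz'.continuousAt.continuousWithinAt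
  · obtain ⟨z', hz', hpos⟩ := hz r (interior_subset hr)
    rwa [hz'.deriv]

/-- Lemma 7: ž is strictly increasing on [1, r_max], provided
ď(r) > 0 there. -/
theorem z_lossy_strictly_increasing
    (T u s fc ε g N₀ B qr qs qc rmax : ℝ)
    (hT : 0 < T) (hu : 0 < u) (hs : 0 < s) (hfc : 0 < fc) (hε : 0 < ε)
    (hg : 0 < g) (hN₀ : 0 < N₀) (hB : 0 < B)
    (hqr : 0 ≤ qr) (hqs : 0 ≤ qs) (hqc : 0 < qc) (hrmax : 1 ≤ rmax)
    (hd : ∀ r ∈ Set.Icc (1 : ℝ) rmax, 0 < dLossy T u s fc ε r) :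
    StrictMonoOn (zLossy T u s fc ε g N₀ B qr qs qc) (Set.Icc 1 rmax) :=
  z_lossy_strictly_increasing_general T u s fc ε g N₀ B qr qs qc rmax hfc hε hg hN₀ hB hqc hd
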